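/- The single-tree interpretation is a surjection from the {∘, 1, D}-terms in variables Σ onto the reduced pointed Σ-labelled rooted trees: for every term t, ⟨t⟩ is a reduced pointed Σ-labelled rooted tree, and every reduced pointed Σ-labelled rooted tree equals ⟨t⟩ for some {∘, 1, D}-term t over Σ. -/

import Mathlib

inductive PreTree (α : Type) : Type
  | node : Bool → List (α × PreTree α) → PreTree α

namespace PreTree

variable {α : Type}

def mark : PreTree α → Bool
  | node b _ => b

def children : PreTree α → List (α × PreTree α)
  | node _ cs => cs

def le : PreTree α → PreTree α → Prop
  | node b₁ c₁, node b₂ c₂ =>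
      (b₂ = true → b₁ = true) ∧
      ∀ q, q ∈ c₂ → ∃ p, p ∈ c₁ ∧ p.1 = q.1 ∧ le p.2 q.2
termination_by _ t₂ => sizeOf t₂
decreasing_by
  have h := List.sizeOf_lt_of_mem ‹q ∈ c₂›
  obtain ⟨qa, qt⟩ := q
  simp at h ⊢
  omega

-- The reduced form of a tree: reduce all child subtrees, then for each
-- label keep only the `≤`-minimal attached subtrees.
open scoped Classical in
noncomputable def reduce : PreTree α → PreTree α
  | node b cs =>
      let cs' : List (α × PreTree α) := cs.attach.map fun p => (p.1.1, reduce p.1.2)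
      node b (cs'.filter fun q =>
        decide (∀ q' ∈ cs', q'.1 = q.1 → le q'.2 q.2 → le q.2 q'.2))
termination_by t => sizeOf t
decreasing_by
  have h := List.sizeOf_lt_of_mem p.2
  obtain ⟨⟨pa, pt⟩, hp⟩ := p
  simp at h ⊢
  omega

/-- A tree is reduced if it equals its reduced form. -/
def Reduced (T : PreTree α) : Prop := reduce T = T

/-- The number of marked (point) vertices of a tree. -/
def markCount : PreTree α → ℕ
  | node b cs => (cond b 1 0) + (cs.attach.map fun p => markCount p.1.2).sum
termination_by t => sizeOf t
decreasing_by
  have h := List.sizeOf_lt_of_mem p.2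
  obtain ⟨⟨pa, pt⟩, hp⟩ := p
  simp at h ⊢
  omega

/-- A pointed tree: exactly one vertex is marked as the point. -/
def Pointed (T : PreTree α) : Prop := markCount T = 1

/-- Remove all point marks. -/
def unmark : PreTree α → PreTree α
  | node _ cs => node false (cs.attach.map fun p => (p.1.1, unmark p.1.2))
termination_by t => sizeOf t
decreasing_by
  have h := List.sizeOf_lt_of_mem p.2
  obtain ⟨⟨pa, pt⟩, hp⟩ := p
  simp at h ⊢
  omega

/-- Graft the tree `S` onto the point of `T` (identifying the point of `T`
with the root of `S`); the marks of `S` determine the new point. -/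
def graft (S : PreTree α) : PreTree α → PreTree α
  | node b cs =>
      if b then node S.mark (cs ++ S.children)
      else node b (cs.attach.map fun p => (p.1.1, graft S p.1.2))
termination_by t => sizeOf t
decreasing_by
  have h := List.sizeOf_lt_of_mem p.2
  obtain ⟨⟨pa, pt⟩, hp⟩ := p
  simp at h ⊢
  omega

/-- Move the point of `T` to its root. -/
def pointAtRoot (T : PreTree α) : PreTree α := node true (unmark T).children

/-- Pointed tree concatenation `T ∘ S`. -/
noncomputable def concat (T S : PreTree α) : PreTree α := reduce (graft S T)

/-- The domain operation `D(T)` on pointed trees. -/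
noncomputable def domTree (T : PreTree α) : PreTree α := reduce (pointAtRoot T)

/-- The trivial pointed tree: one vertex, both root and point. -/
def trivialTree : PreTree α := node true []

/-- The two-vertex pointed tree with a single `a`-labelled edge, point at the child. -/
def arrow (a : α) : PreTree α := node false [(a, node true [])]

/-- Set-theoretic equality of trees (children lists regarded as sets). -/
def eqv : PreTree α → PreTree α → Prop
  | node b₁ c₁, node b₂ c₂ =>
      b₁ = b₂ ∧
      (∀ p, p ∈ c₁ → ∃ q, q ∈ c₂ ∧ p.1 = q.1 ∧ eqv p.2 q.2) ∧
      (∀ q, q ∈ c₂ → ∃ p : {x // x ∈ c₁}, p.1.1 = q.1 ∧ eqv p.1.2 q.2)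
termination_by t₁ _ => sizeOf t₁
decreasing_by
  · have h₁ := List.sizeOf_lt_of_mem ‹p ∈ c₁›
    obtain ⟨pa, pt⟩ := p
    simp at h₁ ⊢
    omega
  · have h₁ := List.sizeOf_lt_of_mem p.2
    obtain ⟨⟨pa, pt⟩, hp⟩ := p
    simp at h₁ ⊢
    omega

/-- The subtree of `T` at position `p` (a list of child indices), if it exists. -/
def subAt : List ℕ → PreTree α → Option (PreTree α)
  | [], t => some t
  | i :: is, node _ cs => (cs[i]?).bind fun p => subAt is p.2

/-- `p` is a vertex of `T`. -/
def IsVertex (T : PreTree α) (p : List ℕ) : Prop := ∃ t, subAt p T = some t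

/-- The vertex `p` of `T` is the point (is marked). -/
def IsPoint (T : PreTree α) (p : List ℕ) : Prop :=
  ∃ t, subAt p T = some t ∧ t.mark = true

/-- There is an `a`-labelled edge of `T` from vertex `p` (the parent) to
vertex `q` (the child). -/
def Edge (T : PreTree α) (a : α) (p q : List ℕ) : Prop :=
  ∃ c, subAt p T = some c ∧ ∃ i t, c.children[i]? = some (a, t) ∧ q = p ++ [i]

theorem root_isVertex (T : PreTree α) : IsVertex T [] := ⟨T, rfl⟩

/-- A homomorphism of pointed labelled rooted trees from `S` to `T`:
a map of vertices preserving the labelled edge relations, sending the root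
to the root and points to points. -/
def HomTree (S T : PreTree α) : Prop :=
  ∃ θ : List ℕ → List ℕ,
    θ [] = [] ∧
    (∀ p, IsVertex S p → IsVertex T (θ p)) ∧
    (∀ a p q, Edge S a p q → Edge T a (θ p) (θ q)) ∧
    (∀ p, IsPoint S p → IsPoint T (θ p))

/-- A homomorphism of the pointed tree `T`, viewed as a relational structure,
into the relational structure `(X, f)`, mapping the root of `T` to `x` and
the point of `T` to `y`. -/
def HomInto {X : Type} (T : PreTree α) (f : α → X → X → Prop) (x y : X) : Prop :=
  ∃ θ : List ℕ → X,
    θ [] = x ∧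
    (∀ a p q, Edge T a p q → f a (θ p) (θ q)) ∧
    (∀ p, IsPoint T p → θ p = y)

end PreTree

namespace FreeKAD

/-- Terms of the signature `{∘, 1, D}`. -/
inductive Term1 (α : Type) : Type
  | var : α → Term1 α
  | one : Term1 α
  | comp : Term1 α → Term1 α → Term1 α
  | dom : Term1 α → Term1 α

/-- Terms of the signature `{∘, +, *, 0, 1, D}` (Kleene algebra with domain). -/
inductive TermK (α : Type) : Type
  | var : α → TermK α
  | zero : TermK α
  | one : TermK α
  | comp : TermK α → TermK α → TermK α
  | add : TermK α → TermK α → TermK α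
  | star : TermK α → TermK α
  | dom : TermK α → TermK α

variable {α : Type}

/-- The relational interpretation of a `{∘, 1, D}`-term over a set `X`,
under an assignment `f` of binary relations on `X` to the variables. -/
def rinterp1 {X : Type} (f : α → X → X → Prop) : Term1 α → X → X → Prop
  | .var a => f a
  | .one => fun x y => x = y
  | .comp s t => fun x y => ∃ z, rinterp1 f s x z ∧ rinterp1 f t z y
  | .dom s => fun x y => x = y ∧ ∃ z, rinterp1 f s x z

/-- The relational interpretation of a `{∘, +, *, 0, 1, D}`-term over a set `X`,
under an assignment `f` of binary relations on `X` to the variables. -/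
def rinterpK {X : Type} (f : α → X → X → Prop) : TermK α → X → X → Prop
  | .var a => f a
  | .zero => fun _ _ => False
  | .one => fun x y => x = y
  | .comp s t => fun x y => ∃ z, rinterpK f s x z ∧ rinterpK f t z y
  | .add s t => fun x y => rinterpK f s x y ∨ rinterpK f t x y
  | .star s => Relation.ReflTransGen (rinterpK f s)
  | .dom s => fun x y => x = y ∧ ∃ z, rinterpK f s x z

/-- Composition of binary relations. -/
def relComp {X : Type} (R S : X → X → Prop) : X → X → Prop :=
  fun x y => ∃ z, R x z ∧ S z y

/-- Union of binary relations. -/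
def relUnion {X : Type} (R S : X → X → Prop) : X → X → Prop :=
  fun x y => R x y ∨ S x y

/-- The domain operation on binary relations. -/
def relDom {X : Type} (R : X → X → Prop) : X → X → Prop :=
  fun x y => x = y ∧ ∃ z, R x z

/-- The identity relation. -/
def relId {X : Type} : X → X → Prop := fun x y => x = y

/-- The empty relation. -/
def relEmpty {X : Type} : X → X → Prop := fun _ _ => False

end FreeKAD

namespace FreeKAD

open PreTree

variable {α : Type}

/-- The single-tree interpretation of `{∘, 1, D}`-terms. -/
noncomputable def interp1 : Term1 α → PreTree α
  | .var a => arrow a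
  | .one => trivialTree
  | .comp s t => concat (interp1 s) (interp1 t)
  | .dom s => domTree (interp1 s)

/-- The set of `≤`-maximal elements of a set of trees. -/
def maximalSet (K : Set (PreTree α)) : Set (PreTree α) :=
  {T | T ∈ K ∧ ∀ S ∈ K, le T S → le S T}

/-- Elementwise lifting of pointed tree concatenation to sets of trees. -/
def liftComp (K L : Set (PreTree α)) : Set (PreTree α) :=
  {U | ∃ T ∈ K, ∃ S ∈ L, U = concat T S}

/-- Elementwise lifting of the domain operation to sets of trees. -/
def liftDom (K : Set (PreTree α)) : Set (PreTree α) :=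
  {U | ∃ T ∈ K, U = domTree T}

/-- Iterated lifted concatenation: `K^0 = {trivial}`, `K^(i+1) = K^i ∘ K`. -/
def powC (K : Set (PreTree α)) : ℕ → Set (PreTree α)
  | 0 => {trivialTree}
  | i + 1 => liftComp (powC K i) K

/-- The standard tree interpretation of `{∘, +, *, 0, 1, D}`-terms. -/
def sinterp : TermK α → Set (PreTree α)
  | .var a => {arrow a}
  | .zero => ∅
  | .one => {trivialTree}
  | .comp s t => maximalSet (liftComp (sinterp s) (sinterp t))
  | .add s t => maximalSet (sinterp s ∪ sinterp t)
  | .star s => maximalSet (⋃ i : ℕ, powC (sinterp s) (i + 1))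
  | .dom s => maximalSet (liftDom (sinterp s))

/-- Equality of sets of trees, with trees compared as (hereditarily finite) sets. -/
def SetEqv (K L : Set (PreTree α)) : Prop :=
  (∀ T ∈ K, ∃ S ∈ L, eqv T S) ∧ (∀ S ∈ L, ∃ T ∈ K, eqv T S)

/-- A set of reduced pointed trees is regular if it is the standard tree
interpretation of some `{∘, +, *, 0, 1, D}`-term. -/
def Regular (L : Set (PreTree α)) : Prop := ∃ t : TermK α, L = sinterp t

/-- The set of reduced trees lying `≤`-below some member of `L`. -/
def down (L : Set (PreTree α)) : Set (PreTree α) :=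
  {T | Reduced T ∧ ∃ S ∈ L, le T S}

end FreeKAD

/-!
Every compound term is interpreted as a reduced form, and `reduce` is idempotent. Grafting,
moving the point to the root and reduction all keep exactly one point: reduction never drops
the unique marked child, since any tree `≤` a marked tree is itself marked.

Conversely, a reduced pointed tree `node b cs` is rebuilt child by child: an unmarked child
`(a, S)` becomes the test `D(a ∘ ⟨S⟩)` at the root, and the marked child the path
`a ∘ ⟨S⟩`, composed last. Concatenation, domain and reduction respect `eqv`, so induction
shows that the interpretation of this term is `eqv` to the tree (the children come out in
a different order, hence only `eqv`).
-/

theorem List.eq_of_sum_map_le_one {β : Type*} {l : List β} {f : β → ℕ}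
    (h : (l.map f).sum ≤ 1) {x y : β} (hx : x ∈ l) (hy : y ∈ l) (hfx : f x ≠ 0)
    (hfy : f y ≠ 0) : x = y := by
  classical
  by_contra hne
  have hsum := ((List.perm_cons_erase hx).map f).sum_eq
  have hle := List.le_sum_of_mem (List.mem_map_of_mem (f := f)
    ((List.mem_erase_of_ne (Ne.symm hne)).2 hy))
  rw [List.map_cons, List.sum_cons] at hsum
  omega

namespace PreTree

variable {α : Type}

@[elab_as_elim]
theorem induction_on {motive : PreTree α → Prop} (T : PreTree α)
    (node : ∀ b cs, (∀ p ∈ cs, motive p.2) → motive (node b cs)) : motive T :=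
  match T with
  | .node b cs => node b cs fun p _ => induction_on p.2 node
termination_by sizeOf T
decreasing_by
  have := List.sizeOf_lt_of_mem ‹p ∈ cs›
  obtain ⟨a, t⟩ := p
  simp only [PreTree.node.sizeOf_spec, Prod.mk.sizeOf_spec] at this ⊢
  omega

theorem le_node_iff {b₁ b₂ : Bool} {c₁ c₂ : List (α × PreTree α)} :
    le (node b₁ c₁) (node b₂ c₂) ↔
      (b₂ = true → b₁ = true) ∧
        ∀ q ∈ c₂, ∃ p ∈ c₁, p.1 = q.1 ∧ le p.2 q.2 := by
  rw [le]

def ChildrenEqv (c d : List (α × PreTree α)) : Prop :=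
  (∀ p ∈ c, ∃ q ∈ d, p.1 = q.1 ∧ eqv p.2 q.2) ∧
    (∀ q ∈ d, ∃ p ∈ c, p.1 = q.1 ∧ eqv p.2 q.2)

theorem eqv_node_iff {b₁ b₂ : Bool} {c₁ c₂ : List (α × PreTree α)} :
    eqv (node b₁ c₁) (node b₂ c₂) ↔ b₁ = b₂ ∧ ChildrenEqv c₁ c₂ := by
  rw [eqv, ChildrenEqv]
  simp only [Subtype.exists, exists_prop]

open scoped Classical in
noncomputable def keepMinimal (l : List (α × PreTree α)) : List (α × PreTree α) :=
  l.filter fun q => decide (∀ q' ∈ l, q'.1 = q.1 → le q'.2 q.2 → le q.2 q'.2)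

theorem reduce_node (b : Bool) (cs : List (α × PreTree α)) :
    reduce (node b cs) = node b (keepMinimal (cs.map fun p => (p.1, reduce p.2))) := by
  rw [reduce, List.attach_map_val (f := fun p : α × PreTree α => (p.1, reduce p.2))]; rfl

theorem markCount_node (b : Bool) (cs : List (α × PreTree α)) :
    markCount (node b cs) = cond b 1 0 + (cs.map fun p => markCount p.2).sum := by
  rw [markCount, List.attach_map_val (f := fun p : α × PreTree α => markCount p.2)]

theorem markCount_cons (b : Bool) (p : α × PreTree α) (cs : List (α × PreTree α)) :
    markCount (node b (p :: cs)) = markCount p.2 + markCount (node b cs) := by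
  simp only [markCount_node, List.map_cons, List.sum_cons]
  omega

theorem markCount_node_true (cs : List (α × PreTree α)) :
    markCount (node true cs) = markCount (node false cs) + 1 := by
  simp only [markCount_node, cond_true, cond_false]
  omega

theorem unmark_node (b : Bool) (cs : List (α × PreTree α)) :
    unmark (node b cs) = node false (cs.map fun p => (p.1, unmark p.2)) := by
  rw [unmark, List.attach_map_val (f := fun p : α × PreTree α => (p.1, unmark p.2))]

theorem graft_node (S : PreTree α) (b : Bool) (cs : List (α × PreTree α)) :
    graft S (node b cs) =
      if b then node S.mark (cs ++ S.children)
      else node b (cs.map fun p => (p.1, graft S p.2)) := by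
  rw [graft, List.attach_map_val (f := fun p : α × PreTree α => (p.1, graft S p.2))]

theorem le_refl (T : PreTree α) : le T T := by
  induction T using induction_on with
  | node b cs ih => exact le_node_iff.2 ⟨id, fun q hq => ⟨q, hq, rfl, ih q hq⟩⟩

theorem le_trans {T S U : PreTree α} (hTS : le T S) (hSU : le S U) : le T U := by
  induction T using induction_on generalizing S U with
  | node b₁ c₁ ih =>
    obtain ⟨b₂, c₂⟩ := S
    obtain ⟨b₃, c₃⟩ := U
    rw [le_node_iff] at hTS hSU ⊢
    refine ⟨hTS.1 ∘ hSU.1, fun r hr => ?_⟩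
    obtain ⟨q, hq, hqr, hle⟩ := hSU.2 r hr
    obtain ⟨p, hp, hpq, hle'⟩ := hTS.2 q hq
    exact ⟨p, hp, hpq.trans hqr, ih p hp hle' hle⟩

theorem eqv_refl (T : PreTree α) : eqv T T := by
  induction T using induction_on with
  | node b cs ih =>
    exact eqv_node_iff.2
      ⟨rfl, fun p hp => ⟨p, hp, rfl, ih p hp⟩, fun p hp => ⟨p, hp, rfl, ih p hp⟩⟩

theorem eqv_symm {T S : PreTree α} (h : eqv T S) : eqv S T := by
  induction T using induction_on generalizing S with
  | node b₁ c₁ ih =>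
    obtain ⟨b₂, c₂⟩ := S
    obtain ⟨hb, hl, hr⟩ := eqv_node_iff.1 h
    refine eqv_node_iff.2 ⟨hb.symm, fun q hq => ?_, fun p hp => ?_⟩
    · obtain ⟨p, hp, hpq, he⟩ := hr q hq
      exact ⟨p, hp, hpq.symm, ih p hp he⟩
    · obtain ⟨q, hq, hpq, he⟩ := hl p hp
      exact ⟨q, hq, hpq.symm, ih p hp he⟩

theorem eqv_trans {T S U : PreTree α} (hTS : eqv T S) (hSU : eqv S U) : eqv T U := by
  induction T using induction_on generalizing S U with
  | node b₁ c₁ ih =>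
    obtain ⟨b₂, c₂⟩ := S
    obtain ⟨b₃, c₃⟩ := U
    obtain ⟨hb₁, hl₁, hr₁⟩ := eqv_node_iff.1 hTS
    obtain ⟨hb₂, hl₂, hr₂⟩ := eqv_node_iff.1 hSU
    refine eqv_node_iff.2 ⟨hb₁.trans hb₂, fun p hp => ?_, fun r hr => ?_⟩
    · obtain ⟨q, hq, hpq, he⟩ := hl₁ p hp
      obtain ⟨r, hr, hqr, he'⟩ := hl₂ q hq
      exact ⟨r, hr, hpq.trans hqr, ih p hp he he'⟩
    · obtain ⟨q, hq, hqr, he'⟩ := hr₂ r hr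
      obtain ⟨p, hp, hpq, he⟩ := hr₁ q hq
      exact ⟨p, hp, hpq.trans hqr, ih p hp he he'⟩

theorem le_of_eqv {T S : PreTree α} (h : eqv T S) : le T S := by
  induction T using induction_on generalizing S with
  | node b₁ c₁ ih =>
    obtain ⟨b₂, c₂⟩ := S
    obtain ⟨hb, -, hr⟩ := eqv_node_iff.1 h
    refine le_node_iff.2 ⟨fun h => hb ▸ h, fun q hq => ?_⟩
    obtain ⟨p, hp, hpq, he⟩ := hr q hq
    exact ⟨p, hp, hpq, ih p hp he⟩

namespace ChildrenEqv

theorem symm {c d : List (α × PreTree α)} (h : ChildrenEqv c d) : ChildrenEqv d c :=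
  ⟨fun q hq => (h.2 q hq).imp fun _ ⟨hp, hpq, he⟩ => ⟨hp, hpq.symm, eqv_symm he⟩,
    fun p hp => (h.1 p hp).imp fun _ ⟨hq, hpq, he⟩ => ⟨hq, hpq.symm, eqv_symm he⟩⟩

theorem append {c₁ c₂ d₁ d₂ : List (α × PreTree α)} (h₁ : ChildrenEqv c₁ d₁)
    (h₂ : ChildrenEqv c₂ d₂) : ChildrenEqv (c₁ ++ c₂) (d₁ ++ d₂) := by
  constructor
  · simp only [List.mem_append]
    rintro p (hp | hp)
    · obtain ⟨q, hq, h⟩ := h₁.1 p hp; exact ⟨q, .inl hq, h⟩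
    · obtain ⟨q, hq, h⟩ := h₂.1 p hp; exact ⟨q, .inr hq, h⟩
  · simp only [List.mem_append]
    rintro q (hq | hq)
    · obtain ⟨p, hp, h⟩ := h₁.2 q hq; exact ⟨p, .inl hp, h⟩
    · obtain ⟨p, hp, h⟩ := h₂.2 q hq; exact ⟨p, .inr hp, h⟩

theorem map {c d : List (α × PreTree α)} {f g : PreTree α → PreTree α} (h : ChildrenEqv c d)
    (hfg : ∀ p ∈ c, ∀ {t}, eqv p.2 t → eqv (f p.2) (g t)) :
    ChildrenEqv (c.map fun p => (p.1, f p.2)) (d.map fun p => (p.1, g p.2)) := by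
  constructor
  · simp only [List.mem_map, forall_exists_index, and_imp, forall_apply_eq_imp_iff₂,
      exists_exists_and_eq_and]
    intro p hp
    obtain ⟨q, hq, hpq, he⟩ := h.1 p hp
    exact ⟨q, hq, hpq, hfg p hp he⟩
  · simp only [List.mem_map, forall_exists_index, and_imp, forall_apply_eq_imp_iff₂,
      exists_exists_and_eq_and]
    intro q hq
    obtain ⟨p, hp, hpq, he⟩ := h.2 q hq
    exact ⟨p, hp, hpq, hfg p hp he⟩

theorem of_eqv {T T' : PreTree α} (h : eqv T T') : ChildrenEqv T.children T'.children := by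
  obtain ⟨b, cs⟩ := T
  obtain ⟨b', cs'⟩ := T'
  exact (eqv_node_iff.1 h).2

theorem of_subset {c d : List (α × PreTree α)} (hcd : c ⊆ d) (hdc : d ⊆ c) :
    ChildrenEqv c d :=
  ⟨fun p hp => ⟨p, hcd hp, rfl, eqv_refl _⟩, fun q hq => ⟨q, hdc hq, rfl, eqv_refl _⟩⟩

end ChildrenEqv

theorem mem_keepMinimal {l : List (α × PreTree α)} {q : α × PreTree α} :
    q ∈ keepMinimal l ↔
      q ∈ l ∧ ∀ q' ∈ l, q'.1 = q.1 → le q'.2 q.2 → le q.2 q'.2 := by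
  simp only [keepMinimal, List.mem_filter, decide_eq_true_eq]

theorem keepMinimal_subset (l : List (α × PreTree α)) : keepMinimal l ⊆ l :=
  fun _ hq => (mem_keepMinimal.1 hq).1

theorem keepMinimal_eq_self_iff {l : List (α × PreTree α)} :
    keepMinimal l = l ↔
      ∀ q ∈ l, ∀ q' ∈ l, q'.1 = q.1 → le q'.2 q.2 → le q.2 q'.2 := by
  simp only [keepMinimal, List.filter_eq_self, decide_eq_true_eq]

/-- The partner of a surviving child survives: whatever undercuts the partner has a partner
that would undercut the child. -/
theorem ChildrenEqv.exists_keepMinimal {c d : List (α × PreTree α)} (h : ChildrenEqv c d) :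
    ∀ p ∈ keepMinimal c, ∃ q ∈ keepMinimal d, p.1 = q.1 ∧ eqv p.2 q.2 := by
  intro p hp
  obtain ⟨hpc, hpmin⟩ := mem_keepMinimal.1 hp
  obtain ⟨q, hqd, hpq, he⟩ := h.1 p hpc
  refine ⟨q, mem_keepMinimal.2 ⟨hqd, fun q' hq'd hq'q hq'le => ?_⟩, hpq, he⟩
  obtain ⟨p', hp'c, hp'q', he'⟩ := h.2 q' hq'd
  have hp'p : le p'.2 p.2 :=
    le_trans (le_of_eqv he') (le_trans hq'le (le_of_eqv (eqv_symm he)))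
  have hpp' := hpmin p' hp'c (hp'q'.trans (hq'q.trans hpq.symm)) hp'p
  exact le_trans (le_of_eqv (eqv_symm he)) (le_trans hpp' (le_of_eqv he'))

theorem ChildrenEqv.keepMinimal {c d : List (α × PreTree α)} (h : ChildrenEqv c d) :
    ChildrenEqv (keepMinimal c) (keepMinimal d) :=
  ⟨h.exists_keepMinimal, fun q hq =>
    (h.symm.exists_keepMinimal q hq).imp fun _ ⟨hp, hqp, he⟩ =>
      ⟨hp, hqp.symm, eqv_symm he⟩⟩

theorem map_snd_eq_self {f : PreTree α → PreTree α} {cs : List (α × PreTree α)}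
    (h : ∀ p ∈ cs, f p.2 = p.2) : (cs.map fun p => (p.1, f p.2)) = cs := by
  conv_rhs => rw [← List.map_id' cs]
  exact List.map_congr_left fun p hp => by rw [h p hp]

theorem reduced_node {b : Bool} {cs : List (α × PreTree α)} (hcs : ∀ p ∈ cs, Reduced p.2)
    (hmin : ∀ q ∈ cs, ∀ q' ∈ cs, q'.1 = q.1 → le q'.2 q.2 → le q.2 q'.2) :
    Reduced (node b cs) := by
  rw [Reduced, reduce_node, map_snd_eq_self hcs, keepMinimal_eq_self_iff.2 hmin]

theorem reduced_reduce (T : PreTree α) : Reduced (reduce T) := by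
  induction T using induction_on with
  | node b cs ih =>
    rw [reduce_node]
    refine reduced_node (fun q hq => ?_)
      fun q hq q' hq' => (mem_keepMinimal.1 hq).2 q' (keepMinimal_subset _ hq')
    obtain ⟨p, hp, rfl⟩ := List.mem_map.1 (keepMinimal_subset _ hq)
    exact ih p hp

theorem reduced_node_iff {b : Bool} {cs : List (α × PreTree α)} :
    Reduced (node b cs) ↔ (∀ p ∈ cs, Reduced p.2) ∧
      ∀ q ∈ cs, ∀ q' ∈ cs, q'.1 = q.1 → le q'.2 q.2 → le q.2 q'.2 := by
  refine ⟨fun h => ?_, fun h => reduced_node h.1 h.2⟩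
  rw [Reduced, reduce_node, node.injEq] at h
  have hcs : ∀ p ∈ cs, Reduced p.2 := by
    intro p hp
    rw [← h.2] at hp
    obtain ⟨p, -, rfl⟩ := List.mem_map.1 (keepMinimal_subset _ hp)
    exact reduced_reduce p.2
  rw [map_snd_eq_self hcs] at h
  exact ⟨hcs, keepMinimal_eq_self_iff.1 h.2⟩

theorem Reduced.of_subset {b b' : Bool} {cs cs' : List (α × PreTree α)}
    (h : Reduced (node b cs)) (hsub : cs' ⊆ cs) : Reduced (node b' cs') := by
  rw [reduced_node_iff] at h ⊢
  exact ⟨fun p hp => h.1 p (hsub hp), fun q hq q' hq' => h.2 q (hsub hq) q' (hsub hq')⟩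

theorem eqv_reduce {T S : PreTree α} (h : eqv T S) : eqv (reduce T) (reduce S) := by
  induction T using induction_on generalizing S with
  | node b₁ c₁ ih =>
    obtain ⟨b₂, c₂⟩ := S
    obtain ⟨hb, hc⟩ := eqv_node_iff.1 h
    rw [reduce_node, reduce_node, eqv_node_iff]
    exact ⟨hb, (hc.map fun p hp _ he => ih p hp he).keepMinimal⟩

theorem markCount_eq_zero_iff {b : Bool} {cs : List (α × PreTree α)} :
    markCount (node b cs) = 0 ↔ b = false ∧ ∀ p ∈ cs, markCount p.2 = 0 := by
  rw [markCount_node, Nat.add_eq_zero_iff, List.sum_eq_zero_iff]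
  simp only [List.mem_map, forall_exists_index, and_imp, forall_apply_eq_imp_iff₂]
  cases b <;> simp

theorem le_sum_markCount {cs : List (α × PreTree α)} {p : α × PreTree α} (hp : p ∈ cs) :
    markCount p.2 ≤ (cs.map fun p => markCount p.2).sum :=
  List.le_sum_of_mem (List.mem_map_of_mem hp)

theorem unmark_of_markCount_eq_zero {T : PreTree α} (h : markCount T = 0) : unmark T = T := by
  induction T using induction_on with
  | node b cs ih =>
    obtain ⟨rfl, hcs⟩ := markCount_eq_zero_iff.1 h
    rw [unmark_node, map_snd_eq_self fun p hp => ih p hp (hcs p hp)]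

theorem markCount_unmark (T : PreTree α) : markCount (unmark T) = 0 := by
  induction T using induction_on with
  | node b cs ih =>
    rw [unmark_node]
    refine markCount_eq_zero_iff.2 ⟨rfl, fun q hq => ?_⟩
    obtain ⟨p, hp, rfl⟩ := List.mem_map.1 hq
    exact ih p hp

theorem markCount_graft (S : PreTree α) {T : PreTree α} (h : markCount T ≤ 1) :
    markCount (graft S T) = markCount T * markCount S := by
  induction T using induction_on with
  | node b cs ih =>
    cases b with
    | true =>
      have h0 : (cs.map fun p => markCount p.2).sum = 0 := by
        rw [markCount_node, cond_true] at h; omega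
      obtain ⟨bS, cS⟩ := S
      simp only [graft_node, if_true, mark, children, markCount_node, List.map_append,
        List.sum_append, h0, cond_true]
      omega
    | false =>
      rw [markCount_node, cond_false, zero_add] at h
      have hcs (p) (hp : p ∈ cs) := ih p hp ((le_sum_markCount hp).trans h)
      rw [graft_node, if_neg Bool.false_ne_true, markCount_node, markCount_node false cs,
        List.map_map]
      simp only [cond_false, zero_add, Function.comp_def]
      rw [List.map_congr_left hcs, List.sum_map_mul_right]

theorem pos_markCount_of_le {T S : PreTree α} (h : le T S) (hS : markCount S ≠ 0) :
    markCount T ≠ 0 := by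
  induction T using induction_on generalizing S with
  | node b₁ c₁ ih =>
    obtain ⟨b₂, c₂⟩ := S
    obtain ⟨hb, hc⟩ := le_node_iff.1 h
    intro hT
    obtain ⟨hb₁, hc₁⟩ := markCount_eq_zero_iff.1 hT
    refine hS (markCount_eq_zero_iff.2 ⟨?_, fun q hq => ?_⟩)
    · cases b₂ <;> simp_all
    · obtain ⟨p, hp, -, hpq⟩ := hc q hq
      by_contra hq0
      exact ih p hp hpq hq0 (hc₁ p hp)

/-- A child `≤`-below the marked child is marked, hence is the marked child itself: the
filter keeps the marked child. -/
theorem sum_markCount_keepMinimal {l : List (α × PreTree α)}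
    (h : (l.map fun p => markCount p.2).sum ≤ 1) :
    ((keepMinimal l).map fun p => markCount p.2).sum = (l.map fun p => markCount p.2).sum := by
  have hle : ((keepMinimal l).map fun p => markCount p.2).sum ≤
      (l.map fun p => markCount p.2).sum :=
    (List.filter_sublist.map _).sum_le_sum fun _ _ => Nat.zero_le _
  by_cases h0 : (l.map fun p => markCount p.2).sum = 0
  · omega
  obtain ⟨n, hn, hn0⟩ := List.exists_mem_ne_zero_of_sum_ne_zero h0
  obtain ⟨x, hx, rfl⟩ := List.mem_map.1 hn
  have hxk : x ∈ keepMinimal l := by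
    refine mem_keepMinimal.2 ⟨hx, fun q hq _ hqx => ?_⟩
    rw [List.eq_of_sum_map_le_one h hq hx (pos_markCount_of_le hqx hn0) hn0]
    exact le_refl _
  have := le_sum_markCount hxk
  omega

theorem markCount_reduce {T : PreTree α} (h : markCount T ≤ 1) :
    markCount (reduce T) = markCount T := by
  induction T using induction_on with
  | node b cs ih =>
    rw [markCount_node] at h
    have hcs : ∀ p ∈ cs, markCount (reduce p.2) = markCount p.2 := fun p hp =>
      ih p hp ((le_sum_markCount hp).trans (by omega))
    have hmap : ((cs.map fun p => (p.1, reduce p.2)).map fun p => markCount p.2).sum =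
        (cs.map fun p => markCount p.2).sum := by
      rw [List.map_map]
      exact congrArg List.sum (List.map_congr_left hcs)
    rw [reduce_node, markCount_node, markCount_node, sum_markCount_keepMinimal (by omega), hmap]

theorem Pointed.reduce {T : PreTree α} (h : Pointed T) : Pointed (reduce T) := by
  rw [Pointed] at h ⊢
  rw [markCount_reduce h.le, h]

theorem Pointed.graft {T : PreTree α} (S : PreTree α) (hT : Pointed T) (hS : Pointed S) :
    Pointed (graft S T) := by
  rw [Pointed] at hT hS ⊢
  rw [markCount_graft S hT.le, hT, hS]

theorem pointed_pointAtRoot (T : PreTree α) : Pointed (pointAtRoot T) := by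
  have h := markCount_unmark T
  rw [pointAtRoot, Pointed, markCount_node, cond_true]
  generalize unmark T = U at h ⊢
  obtain ⟨b, cs⟩ := U
  rw [markCount_node] at h
  rw [children]
  omega

theorem eqv_unmark {T S : PreTree α} (h : eqv T S) : eqv (unmark T) (unmark S) := by
  induction T using induction_on generalizing S with
  | node b₁ c₁ ih =>
    obtain ⟨b₂, c₂⟩ := S
    rw [unmark_node, unmark_node, eqv_node_iff]
    exact ⟨rfl, ((eqv_node_iff.1 h).2.map fun p hp _ he => ih p hp he)⟩

theorem eqv_graft {S S' T T' : PreTree α} (hS : eqv S S') (hT : eqv T T') :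
    eqv (graft S T) (graft S' T') := by
  induction T using induction_on generalizing T' with
  | node b₁ c₁ ih =>
    obtain ⟨b₂, c₂⟩ := T'
    obtain ⟨rfl, hc⟩ := eqv_node_iff.1 hT
    obtain ⟨bS, cS⟩ := S
    obtain ⟨bS', cS'⟩ := S'
    obtain ⟨rfl, hcS⟩ := eqv_node_iff.1 hS
    rw [graft_node, graft_node]
    split
    · exact eqv_node_iff.2 ⟨rfl, hc.append hcS⟩
    · exact eqv_node_iff.2 ⟨rfl, hc.map fun p hp _ he => ih p hp he⟩

theorem eqv_concat {T T' S S' : PreTree α} (hT : eqv T T') (hS : eqv S S') :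
    eqv (concat T S) (concat T' S') :=
  eqv_reduce (eqv_graft hS hT)

theorem eqv_domTree {T T' : PreTree α} (h : eqv T T') : eqv (domTree T) (domTree T') :=
  eqv_reduce (eqv_node_iff.2 ⟨rfl, .of_eqv (eqv_unmark h)⟩)

theorem reduced_singleton {b : Bool} (a : α) {Z : PreTree α} (hZ : Reduced Z) :
    Reduced (node b [(a, Z)]) :=
  reduced_node (by simpa using hZ) (by simp)

theorem reduced_trivialTree : Reduced (trivialTree : PreTree α) :=
  reduced_node (by simp) (by simp)

theorem reduced_arrow (a : α) : Reduced (arrow a) :=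
  reduced_singleton a reduced_trivialTree

theorem pointed_trivialTree : Pointed (trivialTree : PreTree α) := by
  simp [Pointed, trivialTree, markCount_node]

theorem pointed_arrow (a : α) : Pointed (arrow a) := by
  simp [Pointed, arrow, markCount_node]

theorem concat_arrow (a : α) {Z : PreTree α} (hZ : Reduced Z) :
    concat (arrow a) Z = node false [(a, Z)] := by
  obtain ⟨b, cs⟩ := Z
  rw [concat, arrow, graft_node, if_neg Bool.false_ne_true, List.map_singleton, graft_node,
    if_pos rfl, List.nil_append]
  exact reduced_singleton a hZ

theorem concat_node_true (c : List (α × PreTree α)) (G : PreTree α) :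
    concat (node true c) G = reduce (node G.mark (c ++ G.children)) := by
  rw [concat, graft_node, if_pos rfl]

theorem domTree_node (b : Bool) (cs : List (α × PreTree α)) :
    domTree (node b cs) = reduce (node true (cs.map fun p => (p.1, unmark p.2))) := by
  rw [domTree, pointAtRoot, unmark_node, children]

end PreTree

namespace FreeKAD

open PreTree

variable {α : Type}

theorem reduced_interp1 : ∀ t : Term1 α, (interp1 t).Reduced
  | .var a => reduced_arrow a
  | .one => reduced_trivialTree
  | .comp _ _ => reduced_reduce _
  | .dom _ => reduced_reduce _

theorem pointed_interp1 : ∀ t : Term1 α, (interp1 t).Pointed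
  | .var a => pointed_arrow a
  | .one => pointed_trivialTree
  | .comp s t => ((pointed_interp1 s).graft _ (pointed_interp1 t)).reduce
  | .dom _ => (pointed_pointAtRoot _).reduce

def termOfChildren : List (α × PreTree α) → Term1 α
  | [] => .one
  | (a, node m cs) :: rest =>
    if markCount (node m cs) = 0 then
      .comp (.dom (.comp (.var a) (termOfChildren cs))) (termOfChildren rest)
    else .comp (termOfChildren rest) (.comp (.var a) (termOfChildren cs))

theorem eqv_interp1_termOfChildren {b : Bool} {cs : List (α × PreTree α)}
    (hred : Reduced (node b cs)) (hpt : Pointed (node b cs)) :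
    eqv (interp1 (termOfChildren cs)) (node b cs) := by
  induction cs using termOfChildren.induct generalizing b with
  | case1 =>
    cases b
    · simp [PreTree.Pointed, markCount_node] at hpt
    · rw [termOfChildren]
      exact eqv_refl _
  | case2 a m cs rest h0 ihS ihrest =>
    obtain ⟨rfl, -⟩ := markCount_eq_zero_iff.1 h0
    rw [PreTree.Pointed, markCount_cons, h0, zero_add] at hpt
    have hS : Reduced (node false cs) := (reduced_node_iff.1 hred).1 _ List.mem_cons_self
    have hS' : Reduced (node true cs) := hS.of_subset (List.Subset.refl _)
    have hY := ihS hS' (by rw [PreTree.Pointed, markCount_node_true, h0])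
    have hR := ihrest (hred.of_subset (List.subset_cons_self _ _)) hpt
    have hunmark : unmark (node true cs) = node false cs := by
      rw [unmark_node, ← unmark_node false, unmark_of_markCount_eq_zero h0]
    rw [termOfChildren, if_pos h0]
    refine eqv_trans (eqv_concat (eqv_domTree (eqv_concat (eqv_refl _) hY)) hR) ?_
    rw [interp1, concat_arrow a hS', domTree_node, List.map_singleton, hunmark,
      (reduced_singleton a hS : Reduced (node true _)), concat_node_true, mark, children,
      List.singleton_append, hred]
    exact eqv_refl _
  | case3 a m cs rest h0 ihrest ihS =>
    replace hpt : markCount (node m cs) + markCount (node b rest) = 1 := by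
      rwa [PreTree.Pointed, markCount_cons] at hpt
    have hrest : markCount (node b rest) = 0 := by omega
    obtain ⟨rfl, -⟩ := markCount_eq_zero_iff.1 hrest
    have hS : Reduced (node m cs) := (reduced_node_iff.1 hred).1 _ List.mem_cons_self
    have hY := ihS hS (by rw [PreTree.Pointed]; omega)
    have hR := ihrest (b := true) (hred.of_subset (List.subset_cons_self _ _))
      (by rw [PreTree.Pointed, markCount_node_true, hrest])
    rw [termOfChildren, if_neg h0]
    refine eqv_trans (eqv_concat hR (eqv_concat (eqv_refl _) hY)) ?_
    rw [interp1, concat_arrow a hS, concat_node_true, mark, children]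
    conv_rhs => rw [← hred]
    exact eqv_reduce (eqv_node_iff.2 ⟨rfl, .of_subset (by simp [List.subset_def, or_comm])
      (by simp [List.subset_def, or_comm])⟩)

/-- The single-tree interpretation is a surjection from the
`{∘, 1, D}`-terms in variables `Σ` onto the reduced pointed `Σ`-labelled
rooted trees: for every term `t`, `⟨t⟩` is a reduced pointed tree, and every
reduced pointed tree equals `⟨t⟩` for some `{∘, 1, D}`-term `t`
(equality of trees, whose children collections are sets, is `eqv`). -/
theorem interp1_surjective {α : Type} :
    (∀ t : Term1 α, (interp1 t).Reduced ∧ (interp1 t).Pointed) ∧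
    (∀ T : PreTree α, T.Reduced → T.Pointed →
        ∃ t : Term1 α, eqv (interp1 t) T) := by
  refine ⟨fun t => ⟨reduced_interp1 t, pointed_interp1 t⟩, fun T hred hpt => ?_⟩
  obtain ⟨b, cs⟩ := T
  exact ⟨termOfChildren cs, eqv_interp1_termOfChildren hred hpt⟩

end FreeKAD
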